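/- Let K be a finite simplicial complex with a metric d. For any ε > 0 and any natural number m there exists a continuous map F : K → [0,1]^{m−1} such that for every point p ∈ [0,1]^{m−1} one has widim_ε(F⁻¹(p), d) ≤ (dim K)/m. -/

import Mathlib

open scoped ENNReal

/-- An abstract finite simplicial complex on a vertex type `V`: a finite, downward closed
family of nonempty finite sets of vertices. -/
structure FinSimpComplex (V : Type) where
  faces : Finset (Finset V)
  nonempty_of_mem : ∀ s ∈ faces, s.Nonempty
  down_closed : ∀ s ∈ faces, ∀ t ⊆ s, t.Nonempty → t ∈ faces

namespace FinSimpComplex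

/-- The geometric realization of `K`: the set of barycentric coordinate functions supported
on a face of `K`. -/
def space {V : Type} [Fintype V] (K : FinSimpComplex V) : Set (V → ℝ) :=
  {x | (∀ v, 0 ≤ x v) ∧ (∑ v, x v = 1) ∧ ∃ s ∈ K.faces, ∀ v, x v ≠ 0 → v ∈ s}

/-- `K` has dimension at most `n`. -/
def dimLE {V : Type} (K : FinSimpComplex V) (n : ℕ) : Prop :=
  ∀ s ∈ K.faces, s.card ≤ n + 1

/-- The dimension of `K` (with value `0` for the empty complex). -/
def dim {V : Type} (K : FinSimpComplex V) : ℕ :=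
  K.faces.sup fun s => s.card - 1

/-- The vertex set of `K`. -/
def vertexSet {V : Type} [Fintype V] [DecidableEq V] (K : FinSimpComplex V) : Finset V :=
  Finset.univ.filter fun v => {v} ∈ K.faces

/-- The open star of the vertex `v` in the realization of `K`: the union of the interiors of
the simplices containing `v`, i.e. the points whose `v`-th barycentric coordinate is nonzero. -/
def star {V : Type} [Fintype V] (K : FinSimpComplex V) (v : V) : Set ↥K.space :=
  {x | (x : V → ℝ) v ≠ 0}

/-- The full subcomplex of `K` spanned by the vertex set `A`. -/
def fullSub {V : Type} [DecidableEq V] (K : FinSimpComplex V) (A : Finset V) :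
    FinSimpComplex V where
  faces := K.faces.filter fun s => s ⊆ A
  nonempty_of_mem s hs := K.nonempty_of_mem s (Finset.mem_filter.1 hs).1
  down_closed s hs t hts htne := Finset.mem_filter.2
    ⟨K.down_closed s (Finset.mem_filter.1 hs).1 t hts htne,
     hts.trans (Finset.mem_filter.1 hs).2⟩

end FinSimpComplex

/-- The diameter of a set with respect to a distance function `d`, valued in `ℝ≥0∞`. -/
noncomputable def diamOn {X : Type*} (d : X → X → ℝ) (S : Set X) : ℝ≥0∞ :=
  ⨆ x ∈ S, ⨆ y ∈ S, ENNReal.ofReal (d x y)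

/-- `f` is an `ε`-embedding w.r.t. `d`: it is continuous and all its fibers have
`d`-diameter `< ε`. -/
def IsEpsEmbedding {X P : Type*} [TopologicalSpace X] [TopologicalSpace P]
    (d : X → X → ℝ) (ε : ℝ) (f : X → P) : Prop :=
  Continuous f ∧ ∀ p : P, diamOn d (f ⁻¹' {p}) < ENNReal.ofReal ε

/-- The `ε`-width dimension of `X` w.r.t. `d`: the minimal integer `n ≥ 0` such that there is
an `ε`-embedding of `X` into some at most `n`-dimensional finite simplicial complex
(`⊤` if no such embedding exists). -/
noncomputable def widim (X : Type*) [TopologicalSpace X] (d : X → X → ℝ) (ε : ℝ) : ℝ≥0∞ :=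
  sInf {r : ℝ≥0∞ | ∃ n : ℕ, (n : ℝ≥0∞) = r ∧
    ∃ (k : ℕ) (K : FinSimpComplex (Fin k)) (f : X → ↥K.space),
      K.dimLE n ∧ IsEpsEmbedding d ε f}

/-- The dynamical distance `d_N(x,y) = max_{0 ≤ n < N} d(Tⁿx, Tⁿy)`. -/
noncomputable def dynDist {X : Type*} (d : X → X → ℝ) (T : X → X) (N : ℕ) (x y : X) : ℝ :=
  (Finset.range N).fold max 0 fun n => d (T^[n] x) (T^[n] y)

/-- The mean dimension `mdim(X,T) = lim_{ε→0} lim_{N→∞} widim_ε(X,d_N)/N`; the limit in `N`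
exists and equals the infimum by subadditivity, and the limit in `ε` is the supremum
by monotonicity. -/
noncomputable def mdim (X : Type*) [TopologicalSpace X] (d : X → X → ℝ) (T : X → X) : ℝ≥0∞ :=
  ⨆ (ε : ℝ) (_ : 0 < ε), ⨅ (N : ℕ) (_ : 0 < N), widim X (dynDist d T N) ε / (N : ℝ≥0∞)

/-- The relative mean dimension of a factor map `π`:
`mdim(π,T) = lim_{ε→0} lim_{N→∞} (sup_y widim_ε(π⁻¹(y), d_N))/N`. -/
noncomputable def mdimRel {X Y : Type*} [TopologicalSpace X] (d : X → X → ℝ)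
    (T : X → X) (π : X → Y) : ℝ≥0∞ :=
  ⨆ (ε : ℝ) (_ : 0 < ε), ⨅ (N : ℕ) (_ : 0 < N),
    (⨆ y : Y, widim ↥(π ⁻¹' {y}) (fun a b => dynDist d T N a.1 b.1) ε) / (N : ℝ≥0∞)

/-- The upper mean dimension of a subset `A ⊆ X`:
`lim_{ε→0} limsup_{N→∞} widim_ε(A,d_N)/N`. -/
noncomputable def umdim {X : Type*} [TopologicalSpace X] (d : X → X → ℝ) (T : X → X)
    (A : Set X) : ℝ≥0∞ :=
  ⨆ (ε : ℝ) (_ : 0 < ε),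
    Filter.limsup (fun N : ℕ =>
      widim ↥A (fun a b => dynDist d T N a.1 b.1) ε / (N : ℝ≥0∞)) Filter.atTop

/-- The lower mean dimension of a subset `A ⊆ X`:
`lim_{ε→0} liminf_{N→∞} widim_ε(A,d_N)/N`. -/
noncomputable def lmdim {X : Type*} [TopologicalSpace X] (d : X → X → ℝ) (T : X → X)
    (A : Set X) : ℝ≥0∞ :=
  ⨆ (ε : ℝ) (_ : 0 < ε),
    Filter.liminf (fun N : ℕ =>
      widim ↥A (fun a b => dynDist d T N a.1 b.1) ε / (N : ℝ≥0∞)) Filter.atTop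

/-- A factor map between dynamical systems: a continuous equivariant surjection. -/
structure IsFactorMap {X Y : Type*} [TopologicalSpace X] [TopologicalSpace Y]
    (T : X → X) (S : Y → Y) (π : X → Y) : Prop where
  continuous : Continuous π
  surjective : Function.Surjective π
  equivariant : ∀ x, π (T x) = S (π x)

/-- The orbit capacity `ocap(A) = lim_{N→∞} (1/N) sup_x Σ_{n<N} 1_A(Tⁿx)`; the limit exists
and equals the infimum by subadditivity. -/
noncomputable def ocap {X : Type*} (T : X → X) (A : Set X) : ℝ≥0∞ :=
  ⨅ (N : ℕ) (_ : 0 < N),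
    (⨆ x : X, ∑ n ∈ Finset.range N, A.indicator (fun _ => (1 : ℝ≥0∞)) (T^[n] x)) / (N : ℝ≥0∞)

/-- The small boundary property. -/
def SmallBoundaryProperty {Y : Type*} [TopologicalSpace Y] (S : Y → Y) : Prop :=
  ∀ y : Y, ∀ U : Set Y, IsOpen U → y ∈ U →
    ∃ V : Set Y, IsOpen V ∧ y ∈ V ∧ V ⊆ U ∧ ocap S (frontier V) = 0

/-- `d` is a metric on `X` compatible with the given topology. -/
def IsCompatibleMetric {X : Type*} [t : TopologicalSpace X] (d : X → X → ℝ) : Prop :=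
  ∃ m : MetricSpace X,
    m.toPseudoMetricSpace.toUniformSpace.toTopologicalSpace = t ∧
    ∀ x y, @dist X m.toPseudoMetricSpace.toDist x y = d x y

/-!
Choose a finite open cover of `K` of order `dim K + 1` and small mesh: in the cumulative
coordinates `N * (x₁ + ⋯ + xₖ)` (vertices listed in a fixed order), take the sets on which, after
subtracting an integer vector `w`, all coordinates lie in a common open interval of length `1`.
These are the open vertex stars of Freudenthal's subdivision of the simplex; a point is in at most
as many of them as it has nonzero barycentric coordinates, because the valid `w` are cut out by
the fractional parts of its coordinates.

Given continuous `ψᵢ` whose positivity sets form a cover of order `n + 1`, the function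
`φ_S = max (min_{i ∈ S} ψᵢ - max (0, max_{i ∉ S} ψᵢ)) 0` is positive at `x` only when `S` is the
set of the `|S|` largest values of `ψ(x)`, so the `S` with `φ_S(x) > 0` have distinct sizes.
Sorting the normalized `φ_S` into `m` classes by `(|S| - 1) mod m`, the class sums form a partition
of unity; `m - 1` of them make up `F`. On a fiber of `F` every class sum is constant, so one of
them is a positive constant there, and the members of that class form a family of order at most
`n / m + 1` whose nerve map is an `ε`-embedding of the fiber.
-/

noncomputable section

open Finset

theorem card_le_div_add_one_of_mod_eq {A : Finset ℕ} {n m r : ℕ} (hle : ∀ a ∈ A, a ≤ n)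
    (hmod : ∀ a ∈ A, a % m = r) : #A ≤ n / m + 1 := by
  calc #A ≤ #(range (n / m + 1)) := by
        refine card_le_card_of_injOn (· / m) (fun a ha => ?_) (fun a ha b hb hab => ?_)
        · simpa [Nat.lt_succ_iff] using Nat.div_le_div_right (c := m) (hle a ha)
        · rw [← Nat.div_add_mod a m, ← Nat.div_add_mod b m, hmod a ha, hmod b hb]
          simp_all
    _ = n / m + 1 := card_range _

theorem mem_iff_min_image_le {α β : Type*} [LinearOrder β] {g : α → β} {B : Finset α}
    (hcut : ∀ a ∈ B, ∀ b ∉ B, g b < g a) (a : α) : a ∈ B ↔ (B.image g).min ≤ g a := by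
  refine ⟨fun ha => min_le (mem_image_of_mem g ha), fun hmin => ?_⟩
  by_contra ha
  rcases B.eq_empty_or_nonempty with rfl | hne
  · simp at hmin
  obtain ⟨b, hb, hbmin⟩ := exists_min_image B g hne
  have : (g b : WithTop β) ≤ (B.image g).min :=
    Finset.le_min fun c hc => by
      obtain ⟨b', hb', rfl⟩ := mem_image.1 hc
      exact WithTop.coe_le_coe.2 (hbmin b' hb')
  exact (hcut b hb a ha).not_ge (WithTop.coe_le_coe.1 (this.trans hmin))

theorem card_le_card_image_add_one_of_cuts {α β : Type*} [LinearOrder β] (g : α → β)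
    (T : Finset α) (𝒞 : Finset (Finset α)) (hT : ∀ B ∈ 𝒞, B ⊆ T)
    (hcut : ∀ B ∈ 𝒞, ∀ a ∈ B, ∀ b ∉ B, g b < g a) : #𝒞 ≤ #(T.image g) + 1 := by
  classical
  calc #𝒞 ≤ #(insert ⊤ ((T.image g).image ((↑) : β → WithTop β))) := by
        refine card_le_card_of_injOn (fun B => (B.image g).min) (fun B hB => ?_)
          (fun B hB B' hB' h => ?_)
        · rcases B.eq_empty_or_nonempty with rfl | hne
          · simp
          obtain ⟨c, hc⟩ := min_of_nonempty (hne.image g)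
          simp only [mem_coe, hc]
          exact mem_insert_of_mem
            (mem_image_of_mem _ (image_subset_image (hT B hB) (mem_of_min hc)))
        · ext a
          rw [mem_iff_min_image_le (hcut B hB), mem_iff_min_image_le (hcut B' hB')]
          rw [show (B.image g).min = (B'.image g).min from h]
    _ ≤ #(T.image g) + 1 := (card_insert_le _ _).trans (by gcongr; exact card_image_le)

theorem Int.eq_floor_or_eq_floor_add_one {R : Type*} [CommRing R] [LinearOrder R]
    [IsStrictOrderedRing R] [FloorRing R] {r : R} {z : ℤ} (h₁ : r - 1 < z) (h₂ : z < r + 1) :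
    z = ⌊r⌋ ∨ (z = ⌊r⌋ + 1 ∧ Int.fract r ≠ 0) := by
  have hlo : ⌊r⌋ ≤ z := by
    have : (⌊r⌋ : R) < z + 1 := by linarith [Int.floor_le r]
    exact_mod_cast Int.lt_add_one_iff.1 (by exact_mod_cast this)
  have hhi : z < ⌊r⌋ + 2 := by
    have : (z : R) < ⌊r⌋ + 2 := by linarith [Int.lt_floor_add_one r]
    exact_mod_cast this
  rcases (show z = ⌊r⌋ ∨ z = ⌊r⌋ + 1 by omega) with h | h
  · exact Or.inl h
  · refine Or.inr ⟨h, fun hfr => ?_⟩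
    have : (z : R) = ⌊r⌋ + 1 := by exact_mod_cast h
    linarith [Int.self_sub_floor r]

theorem card_le_card_image_fract_add_one {κ : Type*} [Fintype κ] [DecidableEq κ] {y : κ → ℝ}
    {k₀ : κ} (hy : y k₀ = 0) (W : Finset (κ → ℤ))
    (hW : ∀ w ∈ W, w k₀ = 0 ∧ ∀ k l, (y k - w k) - (y l - w l) < 1) :
    #W ≤ #(({k | Int.fract (y k) ≠ 0} : Finset κ).image fun k => Int.fract (y k)) + 1 := by
  have hfloor : ∀ w ∈ W, ∀ k, w k = ⌊y k⌋ ∨ (w k = ⌊y k⌋ + 1 ∧ Int.fract (y k) ≠ 0) :=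
    fun w hw k => by
      have h₁ := (hW w hw).2 k k₀
      have h₂ := (hW w hw).2 k₀ k
      simp only [hy, (hW w hw).1, Int.cast_zero, sub_zero] at h₁ h₂
      exact Int.eq_floor_or_eq_floor_add_one (by linarith) (by linarith)
  let B : (κ → ℤ) → Finset κ := fun w => {k | w k ≠ ⌊y k⌋}
  have hB : ∀ w ∈ W, ∀ k ∈ B w, w k = ⌊y k⌋ + 1 ∧ Int.fract (y k) ≠ 0 := fun w hw k hk =>
    (hfloor w hw k).resolve_left (mem_filter.1 hk).2
  have hnB : ∀ w, ∀ k ∉ B w, w k = ⌊y k⌋ := fun w k hk => by simpa [B] using hk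
  have hBinj : Set.InjOn B W := fun w hw w' hw' h => funext fun k => by
    by_cases hk : k ∈ B w
    · rw [(hB w hw k hk).1, (hB w' hw' k (h ▸ hk)).1]
    · rw [hnB w k hk, hnB w' k (h ▸ hk)]
  rw [← card_image_of_injOn hBinj]
  refine card_le_card_image_add_one_of_cuts _ _ _ (fun C hC k hk => ?_) fun C hC k hk l hl => ?_
  all_goals obtain ⟨w, hw, rfl⟩ := mem_image.1 hC
  · exact mem_filter.2 ⟨mem_univ k, (hB w hw k hk).2⟩
  · have h := (hW w hw).2 l k
    rw [(hB w hw k hk).1, hnB w l hl] at h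
    push_cast at h
    simp only [← Int.self_sub_floor]
    linarith


theorem diamOn_lt_ofReal {X : Type*} {d : X → X → ℝ} {S : Set X} {δ ε : ℝ} (hε : 0 < ε)
    (hδε : δ < ε) (hS : ∀ a ∈ S, ∀ b ∈ S, d a b ≤ δ) : diamOn d S < ENNReal.ofReal ε := by
  calc diamOn d S ≤ ENNReal.ofReal δ :=
        iSup₂_le fun a ha => iSup₂_le fun b hb => ENNReal.ofReal_le_ofReal (hS a ha b hb)
    _ < ENNReal.ofReal ε := (ENNReal.ofReal_lt_ofReal_iff hε).2 hδε

theorem IsEpsEmbedding.comp {X P Q : Type*} [TopologicalSpace X] [TopologicalSpace P]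
    [TopologicalSpace Q] {d : X → X → ℝ} {ε : ℝ} (hε : 0 < ε) {f : X → P} {g : P → Q}
    (hf : IsEpsEmbedding d ε f) (hg : Continuous g) (hginj : Function.Injective g) :
    IsEpsEmbedding d ε (g ∘ f) := by
  refine ⟨hg.comp hf.1, fun q => ?_⟩
  by_cases h : ∃ x, g (f x) = q
  · obtain ⟨x, rfl⟩ := h
    have : (g ∘ f) ⁻¹' {g (f x)} = f ⁻¹' {f x} := by
      ext y; simp [hginj.eq_iff]
    exact this ▸ hf.2 (f x)
  · simp only [not_exists] at h
    have : (g ∘ f) ⁻¹' {q} = ∅ := Set.eq_empty_of_forall_notMem fun y hy => h y hy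
    simpa [this, diamOn] using hε

namespace FinSimpComplex

def mapEquiv {V W : Type} (K : FinSimpComplex V) (e : V ≃ W) : FinSimpComplex W where
  faces := K.faces.map (Finset.mapEmbedding e.toEmbedding).toEmbedding
  nonempty_of_mem s hs := by
    obtain ⟨s₀, hs₀, rfl⟩ := Finset.mem_map.1 hs
    exact (K.nonempty_of_mem s₀ hs₀).map
  down_closed s hs t hts htne := by
    obtain ⟨s₀, hs₀, rfl⟩ := Finset.mem_map.1 hs
    obtain ⟨u, hus, rfl⟩ := Finset.subset_map_iff.1 hts
    exact Finset.mem_map_of_mem _ (K.down_closed s₀ hs₀ u hus (Finset.map_nonempty.1 htne))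

theorem dimLE.mapEquiv {V W : Type} {K : FinSimpComplex V} {n : ℕ} (hK : K.dimLE n)
    (e : V ≃ W) : (K.mapEquiv e).dimLE n := by
  intro s hs
  obtain ⟨s₀, hs₀, rfl⟩ := Finset.mem_map.1 hs
  simpa using hK s₀ hs₀

def spaceMapEquiv {V W : Type} [Fintype V] [Fintype W] (K : FinSimpComplex V) (e : V ≃ W) :
    K.space → (K.mapEquiv e).space := fun x =>
  ⟨x.1 ∘ e.symm, fun w => x.2.1 _, (Equiv.sum_comp e.symm x.1).trans x.2.2.1, by
    obtain ⟨s, hs, hsx⟩ := x.2.2.2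
    exact ⟨s.map e.toEmbedding, Finset.mem_map_of_mem _ hs, fun w hw =>
      Finset.mem_map_equiv.2 (hsx _ hw)⟩⟩

theorem continuous_spaceMapEquiv {V W : Type} [Fintype V] [Fintype W] (K : FinSimpComplex V)
    (e : V ≃ W) : Continuous (K.spaceMapEquiv e) :=
  ((continuous_pi fun w => continuous_apply (e.symm w)).comp continuous_subtype_val).subtype_mk _

theorem spaceMapEquiv_injective {V W : Type} [Fintype V] [Fintype W] (K : FinSimpComplex V)
    (e : V ≃ W) : Function.Injective (K.spaceMapEquiv e) := fun x y h => by
  ext v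
  simpa [spaceMapEquiv] using congrFun (congrArg Subtype.val h) (e v)

end FinSimpComplex

theorem widim_le_of_isEpsEmbedding {X : Type*} [TopologicalSpace X] {d : X → X → ℝ} {ε : ℝ}
    (hε : 0 < ε) {V : Type} [Fintype V] {K : FinSimpComplex V} {n : ℕ} (hK : K.dimLE n)
    {f : X → K.space} (hf : IsEpsEmbedding d ε f) : widim X d ε ≤ n :=
  let e := Fintype.equivFin V
  sInf_le ⟨n, rfl, _, K.mapEquiv e, K.spaceMapEquiv e ∘ f, hK.mapEquiv e,
    hf.comp hε (K.continuous_spaceMapEquiv e) (K.spaceMapEquiv_injective e)⟩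

section Normalize

variable {σ Y : Type*} [Fintype σ] {f : σ → Y → ℝ}

def normalized (f : σ → Y → ℝ) (s : σ) (y : Y) : ℝ := f s y / ∑ t, f t y

theorem normalized_nonneg (hf0 : ∀ s y, 0 ≤ f s y) (s : σ) (y : Y) : 0 ≤ normalized f s y :=
  div_nonneg (hf0 s y) (sum_nonneg fun t _ => hf0 t y)

theorem sum_normalized (hfpos : ∀ y, 0 < ∑ s, f s y) (y : Y) : ∑ s, normalized f s y = 1 := by
  simp only [normalized, ← sum_div, div_self (hfpos y).ne']

theorem normalized_pos_iff (hfpos : ∀ y, 0 < ∑ s, f s y) {s : σ} {y : Y} :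
    0 < normalized f s y ↔ 0 < f s y :=
  div_pos_iff_of_pos_right (hfpos y)

theorem continuous_normalized [TopologicalSpace Y] (hfc : ∀ s, Continuous (f s))
    (hfpos : ∀ y, 0 < ∑ s, f s y) (s : σ) : Continuous (normalized f s) :=
  (hfc s).div (continuous_finsetSum _ fun t _ => hfc t) fun y => (hfpos y).ne'

end Normalize

open scoped Classical in
def FinSimpComplex.nerve {σ : Type} {Y : Type*} [Fintype σ] (f : σ → Y → ℝ) :
    FinSimpComplex σ where
  faces := univ.filter fun A => A.Nonempty ∧ ∃ y, ∀ s ∈ A, 0 < f s y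
  nonempty_of_mem A hA := (mem_filter.1 hA).2.1
  down_closed A hA B hBA hB := by
    obtain ⟨-, -, y, hy⟩ := mem_filter.1 hA
    exact mem_filter.2 ⟨mem_univ B, hB, y, fun s hs => hy s (hBA hs)⟩

theorem FinSimpComplex.nerve_dimLE {σ : Type} {Y : Type*} [Fintype σ] {f : σ → Y → ℝ} {k : ℕ}
    (hord : ∀ y, #{s | 0 < f s y} ≤ k + 1) : (nerve f).dimLE k := by
  classical
  intro A hA
  obtain ⟨-, -, y, hy⟩ := mem_filter.1 hA
  exact (card_le_card fun s hs => mem_filter.2 ⟨mem_univ s, hy s hs⟩).trans (hord y)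

theorem FinSimpComplex.normalized_mem_nerve_space {σ : Type} {Y : Type*} [Fintype σ]
    {f : σ → Y → ℝ} (hf0 : ∀ s y, 0 ≤ f s y) (hfpos : ∀ y, 0 < ∑ s, f s y) (y : Y) :
    (normalized f · y) ∈ (nerve f).space := by
  classical
  refine ⟨fun s => normalized_nonneg hf0 s y, sum_normalized hfpos y,
    ({s | 0 < f s y} : Finset σ), ?_, ?_⟩
  · obtain ⟨s, -, hs⟩ := (sum_pos_iff_of_nonneg fun s _ => hf0 s y).1 (hfpos y)
    exact mem_filter.2 ⟨mem_univ _, ⟨s, by simpa using hs⟩, y, fun s hs => (mem_filter.1 hs).2⟩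
  · intro s hs
    exact mem_filter.2 ⟨mem_univ s,
      (normalized_pos_iff hfpos).1 ((normalized_nonneg hf0 s y).lt_of_ne' hs)⟩

theorem widim_le_of_fine_family {Y : Type*} [TopologicalSpace Y] {d : Y → Y → ℝ} {ε δ : ℝ}
    (hε : 0 < ε) (hδε : δ < ε) {σ : Type} [Fintype σ] {f : σ → Y → ℝ}
    (hfc : ∀ s, Continuous (f s)) (hf0 : ∀ s y, 0 ≤ f s y) (hfpos : ∀ y, 0 < ∑ s, f s y)
    {k : ℕ} (hord : ∀ y, #{s | 0 < f s y} ≤ k + 1)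
    (hfine : ∀ s a b, 0 < f s a → 0 < f s b → d a b ≤ δ) : widim Y d ε ≤ k := by
  let g : Y → (FinSimpComplex.nerve f).space := fun y =>
    ⟨(normalized f · y), FinSimpComplex.normalized_mem_nerve_space hf0 hfpos y⟩
  refine widim_le_of_isEpsEmbedding hε (FinSimpComplex.nerve_dimLE hord)
    (f := g) ⟨(continuous_pi (continuous_normalized hfc hfpos)).subtype_mk _, fun q => ?_⟩
  refine diamOn_lt_ofReal hε hδε fun a (ha : g a = q) b (hb : g b = q) => ?_
  obtain ⟨s, -, hs⟩ := (sum_pos_iff_of_nonneg fun s _ => hf0 s a).1 (hfpos a)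
  have hab : normalized f s a = normalized f s b :=
    congrFun (congrArg Subtype.val (ha.trans hb.symm)) s
  exact hfine s a b hs ((normalized_pos_iff hfpos).1 (hab ▸ (normalized_pos_iff hfpos).2 hs))

section CubeMap

variable {X : Type*} {σ : Type} {φ : σ → X → ℝ} {ℓ : σ → ℕ} {k : ℕ}

def levelPart (φ : σ → X → ℝ) (ℓ : σ → ℕ) (k : ℕ) (j : Fin (k + 1)) (s : σ) (x : X) : ℝ :=
  if Fin.ofNat (k + 1) (ℓ s) = j then φ s x else 0

theorem levelPart_nonneg (hφ0 : ∀ s x, 0 ≤ φ s x) (j : Fin (k + 1)) (s : σ) (x : X) :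
    0 ≤ levelPart φ ℓ k j s x := by
  unfold levelPart; split_ifs <;> simp [hφ0]

variable [Fintype σ]

def levelSum (φ : σ → X → ℝ) (ℓ : σ → ℕ) (k : ℕ) (j : Fin (k + 1)) (x : X) : ℝ :=
  ∑ s, levelPart φ ℓ k j s x

theorem sum_levelSum (hφ1 : ∀ x, ∑ s, φ s x = 1) (x : X) :
    ∑ j, levelSum φ ℓ k j x = 1 := by
  simp only [← hφ1 x, levelSum, levelPart]
  rw [sum_comm]
  exact sum_congr rfl fun s _ => by simp

theorem levelSum_mem_Icc (hφ0 : ∀ s x, 0 ≤ φ s x) (hφ1 : ∀ x, ∑ s, φ s x = 1)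
    (j : Fin (k + 1)) (x : X) : levelSum φ ℓ k j x ∈ Set.Icc (0 : ℝ) 1 :=
  ⟨sum_nonneg fun s _ => levelPart_nonneg hφ0 j s x, sum_levelSum (ℓ := ℓ) hφ1 x ▸
    single_le_sum (fun i _ => sum_nonneg fun s _ => levelPart_nonneg hφ0 i s x) (mem_univ j)⟩

theorem card_levelPart_pos_le {n : ℕ} (hℓn : ∀ s x, 0 < φ s x → ℓ s ≤ n)
    (hℓinj : ∀ x, Set.InjOn ℓ {s | 0 < φ s x}) (j : Fin (k + 1)) (x : X) :
    #{s | 0 < levelPart φ ℓ k j s x} ≤ n / (k + 1) + 1 := by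
  classical
  have hpos : ∀ s ∈ ({s | 0 < levelPart φ ℓ k j s x} : Finset σ),
      0 < φ s x ∧ Fin.ofNat (k + 1) (ℓ s) = j := fun s hs => by
    have hs := (mem_filter.1 hs).2
    unfold levelPart at hs
    split_ifs at hs with h
    · exact ⟨hs, h⟩
    · exact absurd hs (lt_irrefl 0)
  rw [← card_image_of_injOn fun s hs t ht => hℓinj x (hpos s hs).1 (hpos t ht).1]
  refine card_le_div_add_one_of_mod_eq (r := j) (fun a ha => ?_) fun a ha => ?_ <;>
    obtain ⟨s, hs, rfl⟩ := mem_image.1 ha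
  · exact hℓn s x (hpos s hs).1
  · rw [← (hpos s hs).2, Fin.val_ofNat]

def cubeMap (φ : σ → X → ℝ) (ℓ : σ → ℕ) (k : ℕ) (x : X) : Fin k → Set.Icc (0 : ℝ) 1 :=
  fun i => Set.projIcc 0 1 zero_le_one (levelSum φ ℓ k i.succ x)

theorem levelSum_eq_of_cubeMap_eq (hφ0 : ∀ s x, 0 ≤ φ s x) (hφ1 : ∀ x, ∑ s, φ s x = 1)
    {a b : X} (h : cubeMap φ ℓ k a = cubeMap φ ℓ k b) (j : Fin (k + 1)) :
    levelSum φ ℓ k j a = levelSum φ ℓ k j b := by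
  have hsucc : ∀ i : Fin k, levelSum φ ℓ k i.succ a = levelSum φ ℓ k i.succ b := fun i => by
    have := congrArg Subtype.val (congrFun h i)
    simpa [cubeMap, Set.projIcc_of_mem _ (levelSum_mem_Icc hφ0 hφ1 _ _)] using this
  refine Fin.cases ?_ (fun i => hsucc i) j
  have ha := sum_levelSum (ℓ := ℓ) (k := k) hφ1 a
  have hb := sum_levelSum (ℓ := ℓ) (k := k) hφ1 b
  rw [Fin.sum_univ_succ, sum_congr rfl fun i _ => hsucc i] at ha
  rw [Fin.sum_univ_succ] at hb
  linarith

theorem exists_levelSum_pos_on_fiber (hφ0 : ∀ s x, 0 ≤ φ s x) (hφ1 : ∀ x, ∑ s, φ s x = 1)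
    (p : Fin k → Set.Icc (0 : ℝ) 1) :
    ∃ j, ∀ a ∈ cubeMap φ ℓ k ⁻¹' {p}, 0 < levelSum φ ℓ k j a := by
  rcases (cubeMap φ ℓ k ⁻¹' {p}).eq_empty_or_nonempty with h | ⟨x₀, hx₀⟩
  · exact ⟨0, by simp [h]⟩
  obtain ⟨j, -, hj⟩ := (sum_pos_iff_of_nonneg fun j _ =>
    (levelSum_mem_Icc (ℓ := ℓ) hφ0 hφ1 j x₀).1).1 (sum_levelSum hφ1 x₀ ▸ one_pos)
  exact ⟨j, fun a ha => levelSum_eq_of_cubeMap_eq hφ0 hφ1 (hx₀.trans ha.symm) j ▸ hj⟩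

variable [TopologicalSpace X]

theorem continuous_levelSum (hφc : ∀ s, Continuous (φ s)) (j : Fin (k + 1)) :
    Continuous (levelSum φ ℓ k j) :=
  continuous_finsetSum _ fun s _ => by unfold levelPart; split_ifs <;> fun_prop

theorem exists_cubeMap_widim_le {d : X → X → ℝ} {ε δ : ℝ} (hε : 0 < ε) (hδε : δ < ε)
    (hφc : ∀ s, Continuous (φ s)) (hφ0 : ∀ s x, 0 ≤ φ s x) (hφ1 : ∀ x, ∑ s, φ s x = 1)
    {n : ℕ} (hℓn : ∀ s x, 0 < φ s x → ℓ s ≤ n) (hℓinj : ∀ x, Set.InjOn ℓ {s | 0 < φ s x})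
    (hfine : ∀ s a b, 0 < φ s a → 0 < φ s b → d a b ≤ δ) (k : ℕ) :
    ∃ F : X → (Fin k → Set.Icc (0 : ℝ) 1), Continuous F ∧
      ∀ p, widim (F ⁻¹' {p}) (fun a b => d a.1 b.1) ε ≤ (n / (k + 1) : ℕ) := by
  refine ⟨cubeMap φ ℓ k, continuous_pi fun i => continuous_projIcc.comp
    (continuous_levelSum hφc _), fun p => ?_⟩
  obtain ⟨j, hj⟩ := exists_levelSum_pos_on_fiber (ℓ := ℓ) hφ0 hφ1 p
  refine widim_le_of_fine_family hε hδε (f := fun s a => levelPart φ ℓ k j s a.1)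
    (fun s => ?_) (fun s a => levelPart_nonneg hφ0 j s a.1) (fun a => by exact hj a.1 a.2)
    (fun a => card_levelPart_pos_le hℓn hℓinj j a.1) (fun s a b ha hb => ?_)
  · unfold levelPart; split_ifs <;> fun_prop
  · unfold levelPart at ha hb
    split_ifs at ha hb
    · exact hfine s a b ha hb
    · exact absurd ha (lt_irrefl 0)

end CubeMap

section TopGap

variable {X : Type*} {ι : Type} [Fintype ι] [DecidableEq ι] {ψ : ι → X → ℝ} {S T : Finset ι}
  {x : X}

def outsideMax (ψ : ι → X → ℝ) (S : Finset ι) (x : X) : ℝ := (univ \ S).fold max 0 (ψ · x)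

theorem outsideMax_nonneg : 0 ≤ outsideMax ψ S x := (le_fold_max _).2 (Or.inl le_rfl)

theorem le_outsideMax {i : ι} (hi : i ∉ S) : ψ i x ≤ outsideMax ψ S x :=
  (le_fold_max _).2 (Or.inr ⟨i, by simpa using hi, le_rfl⟩)

theorem outsideMax_lt {c : ℝ} (hc : 0 < c) (h : ∀ i ∉ S, ψ i x < c) : outsideMax ψ S x < c :=
  (fold_max_lt _).2 ⟨hc, fun i hi => h i (mem_sdiff.1 hi).2⟩

theorem continuous_outsideMax [TopologicalSpace X] (hψc : ∀ i, Continuous (ψ i))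
    (S : Finset ι) : Continuous (outsideMax ψ S) := by
  unfold outsideMax
  induction univ \ S using Finset.cons_induction with
  | empty => exact continuous_const
  | cons i s hi ih => simpa only [fold_cons] using (hψc i).max ih

def topGap (ψ : ι → X → ℝ) (S : Finset ι) (x : X) : ℝ :=
  if h : S.Nonempty then max (S.inf' h (ψ · x) - outsideMax ψ S x) 0 else 0

theorem topGap_nonneg : 0 ≤ topGap ψ S x := by
  unfold topGap; split_ifs <;> simp

theorem topGap_pos_iff :
    0 < topGap ψ S x ↔ ∃ h : S.Nonempty, outsideMax ψ S x < S.inf' h (ψ · x) := by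
  unfold topGap
  split_ifs with h
  · simp [h]
  · simp [h]

theorem pos_of_topGap_pos (hS : 0 < topGap ψ S x) {i : ι} (hi : i ∈ S) : 0 < ψ i x := by
  obtain ⟨h, hlt⟩ := topGap_pos_iff.1 hS
  exact outsideMax_nonneg.trans_lt (hlt.trans_le (inf'_le _ hi))

theorem lt_of_topGap_pos (hS : 0 < topGap ψ S x) {i j : ι} (hi : i ∉ S) (hj : j ∈ S) :
    ψ i x < ψ j x := by
  obtain ⟨h, hlt⟩ := topGap_pos_iff.1 hS
  exact (le_outsideMax hi).trans_lt (hlt.trans_le (inf'_le _ hj))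

theorem eq_of_topGap_pos_of_card_eq (hS : 0 < topGap ψ S x) (hT : 0 < topGap ψ T x)
    (hcard : #S = #T) : S = T := by
  by_contra hne
  obtain ⟨i, hiS, hiT⟩ := not_subset.1 fun h => hne (eq_of_subset_of_card_le h hcard.ge)
  obtain ⟨j, hjT, hjS⟩ := not_subset.1 fun h => hne (eq_of_subset_of_card_le h hcard.le).symm
  exact (lt_of_topGap_pos hT hiT hjT).not_gt (lt_of_topGap_pos hS hjS hiS)

theorem exists_topGap_pos (hx : ∃ i, 0 < ψ i x) : ∃ S, 0 < topGap ψ S x := by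
  obtain ⟨i₀, hi₀⟩ := hx
  have hne : (univ : Finset ι).Nonempty := ⟨i₀, mem_univ _⟩
  set t := univ.sup' hne (ψ · x)
  obtain ⟨imax, -, himax⟩ := exists_mem_eq_sup' hne (ψ · x)
  have ht : 0 < t := hi₀.trans_le (le_sup' (ψ · x) (mem_univ i₀))
  have hS : ({i | ψ i x = t} : Finset ι).Nonempty := ⟨imax, by simp [t, himax]⟩
  refine ⟨({i | ψ i x = t} : Finset ι), topGap_pos_iff.2 ⟨hS, ?_⟩⟩
  have hinf : ({i | ψ i x = t} : Finset ι).inf' hS (ψ · x) = t :=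
    le_antisymm (hS.elim fun i hi => (inf'_le _ hi).trans (mem_filter.1 hi).2.le)
      (le_inf' _ _ fun i hi => (mem_filter.1 hi).2.ge)
  rw [hinf]
  refine outsideMax_lt ht fun i hi => (le_sup' (ψ · x) (mem_univ i)).lt_of_ne ?_
  simpa using hi

theorem continuous_topGap [TopologicalSpace X] (hψc : ∀ i, Continuous (ψ i)) (S : Finset ι) :
    Continuous (topGap ψ S) := by
  unfold topGap
  split_ifs with h
  · exact ((Continuous.finset_inf'_apply h fun i _ => hψc i).sub
      (continuous_outsideMax hψc S)).max continuous_const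
  · exact continuous_const

end TopGap

theorem exists_cubeMap_widim_le_of_cover {X : Type*} [TopologicalSpace X] {d : X → X → ℝ}
    {ε δ : ℝ} (hε : 0 < ε) (hδε : δ < ε) {ι : Type} [Fintype ι] [DecidableEq ι]
    {ψ : ι → X → ℝ} (hψc : ∀ i, Continuous (ψ i)) {n : ℕ}
    (hord : ∀ x, #{i | 0 < ψ i x} ≤ n + 1) (hcov : ∀ x, ∃ i, 0 < ψ i x)
    (hfine : ∀ i a b, 0 < ψ i a → 0 < ψ i b → d a b ≤ δ) (k : ℕ) :
    ∃ F : X → (Fin k → Set.Icc (0 : ℝ) 1), Continuous F ∧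
      ∀ p, widim (F ⁻¹' {p}) (fun a b => d a.1 b.1) ε ≤ (n / (k + 1) : ℕ) := by
  have hpos : ∀ x, 0 < ∑ S, topGap ψ S x := fun x =>
    let ⟨S, hS⟩ := exists_topGap_pos (hcov x)
    sum_pos' (fun _ _ => topGap_nonneg) ⟨S, mem_univ S, hS⟩
  have hgap {S x} (h : 0 < normalized (topGap ψ) S x) : 0 < topGap ψ S x :=
    (normalized_pos_iff hpos).1 h
  have hne {S x} (h : 0 < normalized (topGap ψ) S x) : S.Nonempty :=
    (topGap_pos_iff.1 (hgap h)).1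
  refine exists_cubeMap_widim_le hε hδε (continuous_normalized (continuous_topGap hψc) hpos)
    (normalized_nonneg fun _ _ => topGap_nonneg) (sum_normalized hpos) (ℓ := fun S => #S - 1)
    (fun S x h => ?_) (fun x S hS T hT h => ?_) (fun S a b ha hb => ?_) k
  · have : #S ≤ n + 1 := (card_le_card fun i hi =>
      mem_filter.2 ⟨mem_univ i, pos_of_topGap_pos (hgap h) hi⟩).trans (hord x)
    show #S - 1 ≤ n
    omega
  · have := (hne hS).card_pos; have := (hne hT).card_pos
    exact eq_of_topGap_pos_of_card_eq (hgap hS) (hgap hT) (by simp only at h; omega)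
  · obtain ⟨i, hi⟩ := hne ha
    exact hfine i a b (pos_of_topGap_pos (hgap ha) hi) (pos_of_topGap_pos (hgap hb) hi)

section CumSum

variable {V : Type} [Fintype V] {n : ℕ} (e : V ≃ Fin n) {x : V → ℝ}

def cumSum (x : V → ℝ) (k : Fin (n + 1)) : ℝ := ∑ v with (e v : ℕ) < k, x v

theorem cumSum_zero : cumSum e x 0 = 0 := by simp [cumSum]

theorem cumSum_last : cumSum e x (Fin.last n) = ∑ v, x v := by simp [cumSum]

theorem cumSum_succ (k : Fin n) :
    cumSum e x k.succ = cumSum e x k.castSucc + x (e.symm k) := by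
  classical
  have : univ.filter (fun v => (e v : ℕ) < k.succ) =
      insert (e.symm k) (univ.filter fun v => (e v : ℕ) < k.castSucc) := by
    ext v
    simp only [mem_filter, mem_univ, true_and, mem_insert, Fin.val_succ, Fin.val_castSucc,
      Nat.lt_succ_iff_lt_or_eq, ← Fin.ext_iff, Equiv.eq_symm_apply]
    tauto
  rw [cumSum, this, sum_insert (by simp), add_comm]
  rfl

theorem cumSum_mem_Icc (hx0 : ∀ v, 0 ≤ x v) (hx1 : ∑ v, x v = 1) (k : Fin (n + 1)) :
    cumSum e x k ∈ Set.Icc (0 : ℝ) 1 :=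
  ⟨sum_nonneg fun v _ => hx0 v, hx1 ▸ sum_le_sum_of_subset_of_nonneg (filter_subset _ _)
    fun v _ _ => hx0 v⟩

theorem continuous_cumSum (k : Fin (n + 1)) : Continuous fun x : V → ℝ => cumSum e x k :=
  continuous_finsetSum _ fun v _ => continuous_apply v

theorem card_image_cumSum_le :
    #(univ.image (cumSum e x)) ≤ #({v | x v ≠ 0} : Finset V) + 1 := by
  have hmem : ∀ k, cumSum e x k ∈
      insert 0 (({v | x v ≠ 0} : Finset V).image fun v => cumSum e x (e v).succ) := by
    refine Fin.induction (by simp [cumSum_zero]) fun k ih => ?_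
    rw [cumSum_succ]
    by_cases hk : x (e.symm k) = 0
    · rwa [hk, add_zero]
    · refine mem_insert_of_mem (mem_image.2 ⟨e.symm k, by simpa using hk, ?_⟩)
      rw [Equiv.apply_symm_apply, cumSum_succ]
  calc #(univ.image (cumSum e x)) ≤ #(insert 0 (({v | x v ≠ 0} : Finset V).image
          fun v => cumSum e x (e v).succ)) := card_le_card fun t ht => by
        obtain ⟨k, -, rfl⟩ := mem_image.1 ht; exact hmem k
    _ ≤ _ := (card_insert_le _ _).trans (by gcongr; exact card_image_le)

theorem card_image_fract_cumSum_le (hx1 : ∑ v, x v = 1) (N : ℕ) :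
    #(({k | Int.fract (N * cumSum e x k) ≠ 0} : Finset (Fin (n + 1))).image
      fun k => Int.fract (N * cumSum e x k)) ≤ #({v | x v ≠ 0} : Finset V) - 1 := by
  set C := univ.image (cumSum e x)
  have h0 : (0 : ℝ) ∈ C := mem_image.2 ⟨0, mem_univ _, cumSum_zero e⟩
  have h1 : (1 : ℝ) ∈ C.erase 0 :=
    mem_erase.2 ⟨one_ne_zero, mem_image.2 ⟨Fin.last n, mem_univ _, (cumSum_last e).trans hx1⟩⟩
  have hsub : ({k | Int.fract (N * cumSum e x k) ≠ 0} : Finset (Fin (n + 1))).image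
      (fun k => Int.fract (N * cumSum e x k)) ⊆ ((C.erase 0).erase 1).image
        fun t => Int.fract (N * t) := by
    intro r hr
    obtain ⟨k, hk, rfl⟩ := mem_image.1 hr
    have hk := (mem_filter.1 hk).2
    refine mem_image.2 ⟨cumSum e x k, ?_, rfl⟩
    refine mem_erase.2 ⟨fun h => ?_, mem_erase.2 ⟨fun h => ?_, mem_image_of_mem _ (mem_univ k)⟩⟩
    · exact hk (by rw [h, mul_one, Int.fract_natCast])
    · exact hk (by rw [h, mul_zero, Int.fract_zero])
  have hC : #C ≤ #({v | x v ≠ 0} : Finset V) + 1 := card_image_cumSum_le e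
  calc _ ≤ #((C.erase 0).erase 1) := (card_le_card hsub).trans card_image_le
    _ = #C - 2 := by rw [card_erase_of_mem h1, card_erase_of_mem h0]; omega
    _ ≤ _ := by omega

end CumSum

section Cell

variable {V : Type} [Fintype V] {n : ℕ} (e : V ≃ Fin n) (N : ℕ)

def cellDefect (w : Fin (n + 1) → Fin (N + 1)) (x : V → ℝ) (k : Fin (n + 1)) : ℝ :=
  N * cumSum e x k - (w k : ℕ)

def InCell (w : Fin (n + 1) → Fin (N + 1)) (x : V → ℝ) : Prop :=
  w 0 = 0 ∧ ∀ k l, cellDefect e N w x k - cellDefect e N w x l < 1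

def cellFun (w : Fin (n + 1) → Fin (N + 1)) (x : V → ℝ) : ℝ :=
  if w 0 = 0 then
    max (1 - univ.sup' univ_nonempty fun p : Fin (n + 1) × Fin (n + 1) =>
      cellDefect e N w x p.1 - cellDefect e N w x p.2) 0
  else 0

theorem continuous_cellFun (w : Fin (n + 1) → Fin (N + 1)) : Continuous (cellFun e N w) := by
  unfold cellFun cellDefect
  split_ifs
  · refine (continuous_const.sub (Continuous.finset_sup'_apply _ fun p _ => ?_)).max
      continuous_const
    have := continuous_cumSum e p.1
    have := continuous_cumSum e p.2
    fun_prop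
  · exact continuous_const

variable {e N} {w : Fin (n + 1) → Fin (N + 1)} {x y : V → ℝ}

theorem cellFun_pos_iff : 0 < cellFun e N w x ↔ InCell e N w x := by
  unfold cellFun InCell
  split_ifs with h
  · simp [h]
  · simp [h]

theorem exists_inCell (hx0 : ∀ v, 0 ≤ x v) (hx1 : ∑ v, x v = 1) : ∃ w, InCell e N w x := by
  have hbound : ∀ k, 0 ≤ N * cumSum e x k ∧ N * cumSum e x k ≤ N := fun k => by
    obtain ⟨h0, h1⟩ := cumSum_mem_Icc e hx0 hx1 k
    exact ⟨by positivity, mul_le_of_le_one_right (Nat.cast_nonneg N) h1⟩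
  have hceil : ∀ k, (((⌈N * cumSum e x k⌉).toNat : ℕ) : ℝ) = ⌈N * cumSum e x k⌉ := fun k => by
    exact_mod_cast Int.toNat_of_nonneg (Int.ceil_nonneg (hbound k).1)
  refine ⟨fun k => ⟨(⌈N * cumSum e x k⌉).toNat, ?_⟩, Fin.ext ?_, fun k l => ?_⟩
  · have : ⌈N * cumSum e x k⌉ ≤ N := Int.ceil_le.2 (by exact_mod_cast (hbound k).2)
    omega
  · simp [cumSum_zero]
  · simp only [cellDefect, hceil]
    linarith [Int.le_ceil (N * cumSum e x k), Int.ceil_lt_add_one (N * cumSum e x l)]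

theorem abs_sub_lt_of_inCell (hN : 0 < N) (hx : InCell e N w x) (hy : InCell e N w y) (v : V) :
    |x v - y v| < 2 / N := by
  have hstep : ∀ z, z v * N = cellDefect e N w z (e v).succ - cellDefect e N w z (e v).castSucc
      + ((w (e v).succ : ℕ) - (w (e v).castSucc : ℕ)) := fun z => by
    simp only [cellDefect, cumSum_succ, Equiv.symm_apply_apply]
    ring
  have h₁ := hx.2 (e v).succ (e v).castSucc
  have h₂ := hx.2 (e v).castSucc (e v).succ
  have h₃ := hy.2 (e v).succ (e v).castSucc
  have h₄ := hy.2 (e v).castSucc (e v).succ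
  have hN' : (0 : ℝ) < N := by exact_mod_cast hN
  rw [lt_div_iff₀ hN', ← abs_of_pos hN', ← abs_mul, sub_mul, abs_lt, hstep x, hstep y]
  constructor <;> linarith

theorem card_cellFun_pos_le (hx1 : ∑ v, x v = 1) :
    #{w | 0 < cellFun e N w x} ≤ #({v | x v ≠ 0} : Finset V) := by
  set A : Finset (Fin (n + 1) → Fin (N + 1)) := {w | 0 < cellFun e N w x}
  let toInt : (Fin (n + 1) → Fin (N + 1)) → Fin (n + 1) → ℤ := fun w k => (w k : ℕ)
  have hinj : Function.Injective toInt := fun w w' h =>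
    funext fun k => Fin.ext (by simpa [toInt] using congrFun h k)
  have hsupp : 0 < #({v | x v ≠ 0} : Finset V) := by
    obtain ⟨v, -, hv⟩ := exists_ne_zero_of_sum_ne_zero (hx1.trans_ne one_ne_zero)
    exact card_pos.2 ⟨v, by simpa using hv⟩
  have hcount := card_le_card_image_fract_add_one (y := fun k => N * cumSum e x k) (k₀ := 0)
    (by simp [cumSum_zero]) (A.image toInt) fun w' hw' => by
      obtain ⟨w, hw, rfl⟩ := mem_image.1 hw'
      have hw := cellFun_pos_iff.1 (mem_filter.1 hw).2
      exact ⟨by simp [toInt, hw.1], fun k l => by simpa [cellDefect, toInt] using hw.2 k l⟩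
  rw [card_image_of_injective A hinj] at hcount
  have := card_image_fract_cumSum_le e hx1 N
  exact hcount.trans (by omega)

end Cell

theorem ENNReal.natCast_div_le (a b : ℕ) : ((a / b : ℕ) : ℝ≥0∞) ≤ a / b := by
  rcases b.eq_zero_or_pos with rfl | hb
  · simp
  rw [ENNReal.le_div_iff_mul_le (Or.inl (by exact_mod_cast hb.ne')) (Or.inl (natCast_ne_top b)),
    ← Nat.cast_mul]
  exact_mod_cast Nat.div_mul_le_self a b

theorem IsCompatibleMetric.exists_pos_forall_dist_lt {X : Type*} [MetricSpace X]
    [CompactSpace X] {d : X → X → ℝ} (hd : IsCompatibleMetric d) {δ : ℝ} (hδ : 0 < δ) :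
    ∃ η > 0, ∀ x y, dist x y < η → d x y < δ := by
  -- `hd` is destructured inside each `have`, so that its metric never becomes a local instance.
  have hcont : Continuous fun p : X × X => d p.1 p.2 := by
    obtain ⟨m, htop, hdist⟩ := hd
    have := @continuous_dist X m.toPseudoMetricSpace
    rw [htop] at this
    simpa only [hdist] using this
  have hself : ∀ y, d y y = 0 := fun y => by
    obtain ⟨m, -, hdist⟩ := hd
    exact hdist y y ▸ @dist_self X m.toPseudoMetricSpace y
  obtain ⟨η, hη, hclose⟩ := Metric.uniformContinuous_iff.1
    (CompactSpace.uniformContinuous_of_continuous hcont) δ hδ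
  refine ⟨η, hη, fun x y hxy => ?_⟩
  have := @hclose (x, y) (y, y) (by simpa [Prod.dist_eq, hη] using hxy)
  rw [Real.dist_eq, hself, sub_zero] at this
  exact (le_abs_self _).trans_lt this

namespace FinSimpComplex

variable {V : Type} [Fintype V] (K : FinSimpComplex V)

theorem isCompact_space : IsCompact K.space := by
  have : K.space = stdSimplex ℝ V ∩ ⋃ s ∈ K.faces, ⋂ v ∉ s, {x | x v = 0} := by
    ext x
    simp only [space, stdSimplex, Set.mem_inter_iff, Set.mem_iUnion, Set.mem_iInter,
      Set.mem_ofPred_eq, exists_prop, and_assoc]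
    refine and_congr_right fun _ => and_congr_right fun _ => exists_congr fun s =>
      and_congr_right fun _ => forall_congr' fun v => not_imp_comm
  rw [this]
  exact (isCompact_stdSimplex ℝ V).inter_right (isClosed_biUnion_finset fun s _ =>
    isClosed_biInter fun v _ => isClosed_eq (continuous_apply v) continuous_const)

theorem card_support_le (x : K.space) :
    #({v | x.1 v ≠ 0} : Finset V) ≤ K.dim + 1 := by
  obtain ⟨-, -, s, hs, hsx⟩ := x.2
  have h₁ : #({v | x.1 v ≠ 0} : Finset V) ≤ #s :=
    card_le_card fun v hv => hsx v (mem_filter.1 hv).2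
  have h₂ : #s - 1 ≤ K.dim := le_sup (f := fun s => #s - 1) hs
  have h₃ : 0 < #s := card_pos.2 (K.nonempty_of_mem s hs)
  omega

end FinSimpComplex

end

theorem gromov_corollary_cube_general {V : Type} [Fintype V]
    (K : FinSimpComplex V) (d : ↥K.space → ↥K.space → ℝ)
    (hd : IsCompatibleMetric d) (ε : ℝ) (hε : 0 < ε) {m : ℕ} (hm : 0 < m) :
    ∃ F : ↥K.space → (Fin (m - 1) → ↥(Set.Icc (0 : ℝ) 1)),
      Continuous F ∧
      ∀ p : Fin (m - 1) → ↥(Set.Icc (0 : ℝ) 1),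
        widim ↥(F ⁻¹' {p}) (fun a b => d a.1 b.1) ε ≤ (K.dim : ℝ≥0∞) / (m : ℝ≥0∞) := by
  obtain ⟨k, rfl⟩ := Nat.exists_eq_add_one_of_ne_zero hm.ne'
  have : CompactSpace K.space := isCompact_iff_compactSpace.1 K.isCompact_space
  obtain ⟨η, hη, hclose⟩ := hd.exists_pos_forall_dist_lt (half_pos hε)
  obtain ⟨N, hN⟩ := exists_nat_gt (2 / η)
  have hN0 : 0 < N := by exact_mod_cast (div_pos two_pos hη).trans hN
  have hmesh : 2 / (N : ℝ) < η := by
    rwa [div_lt_iff₀ (by positivity), mul_comm, ← div_lt_iff₀ hη]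
  let e := Fintype.equivFin V
  have hfine : ∀ w (a b : K.space), 0 < cellFun e N w a.1 → 0 < cellFun e N w b.1 →
      d a b ≤ ε / 2 := fun w a b ha hb => by
    refine (hclose a b ?_).le
    rw [Subtype.dist_eq, dist_pi_lt_iff hη]
    exact fun v => (Real.dist_eq _ _ ▸ abs_sub_lt_of_inCell hN0 (cellFun_pos_iff.1 ha)
      (cellFun_pos_iff.1 hb) v).trans hmesh
  obtain ⟨F, hF, hFw⟩ := exists_cubeMap_widim_le_of_cover hε (half_lt_self hε)
    (fun w => (continuous_cellFun e N w).comp continuous_subtype_val)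
    (fun x => (card_cellFun_pos_le x.2.2.1).trans (K.card_support_le x))
    (fun x => (exists_inCell x.2.1 x.2.2.1).imp fun w => cellFun_pos_iff.2) hfine k
  exact ⟨F, hF, fun p => (hFw p).trans (ENNReal.natCast_div_le _ _)⟩

/-- **Corollary 3.4.** Let `K` be a finite simplicial complex with a metric `d`. For any
`ε > 0` and any natural number `m ≥ 1` there exists a continuous map `F : K → [0,1]^{m-1}`
such that `widim_ε(F⁻¹(p), d) ≤ (dim K)/m` for every `p ∈ [0,1]^{m-1}`. -/
theorem gromov_corollary_cube {V : Type} [Fintype V] [DecidableEq V]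
    (K : FinSimpComplex V) (d : ↥K.space → ↥K.space → ℝ)
    (hd : IsCompatibleMetric d) (ε : ℝ) (hε : 0 < ε) {m : ℕ} (hm : 0 < m) :
    ∃ F : ↥K.space → (Fin (m - 1) → ↥(Set.Icc (0 : ℝ) 1)),
      Continuous F ∧
      ∀ p : Fin (m - 1) → ↥(Set.Icc (0 : ℝ) 1),
        widim ↥(F ⁻¹' {p}) (fun a b => d a.1 b.1) ε ≤ (K.dim : ℝ≥0∞) / (m : ℝ≥0∞) :=
  gromov_corollary_cube_general K d hd ε hε hm
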